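/- Let M ∈ ℂⁿˣⁿ be Hermitian positive semidefinite with eigenvalues λ₁ ≥ … ≥ λₙ and λ_k > 0. For every B ∈ ℂⁿˣᵏ with orthonormal columns such that Bᴴ M B is invertible, tr((Bᴴ M B)⁻¹) ≥ Σᵢ₌₁ᵏ 1/λᵢ, with equality when the columns of B are orthonormal eigenvectors of M associated with the k largest eigenvalues. -/

import Mathlib

/-!
Let `A = Bᴴ M B` and let `ν₁ ≥ ⋯ ≥ ν_k` be its eigenvalues. They interlace with those of `M`:
`ν_i ≤ λ_i`. Indeed, after diagonalising `M` and `A`, `B` becomes an isometry `C` with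
`Cᴴ diag(λ) C = diag(ν)`; the image under `C` of the span of the first `i` coordinate vectors
(dimension `i`) meets the span of the last `n - i + 1` coordinate vectors nontrivially, and on a
nonzero vector of the intersection the Rayleigh quotient of `diag(λ)` is both `≥ ν_i` and
`≤ λ_i`. As `A` is positive semidefinite and invertible, `ν_i > 0`, so
`tr A⁻¹ = ∑ 1/ν_i ≥ ∑ 1/λ_i`. If the columns of `B` are eigenvectors, `A = diag(λ_1, …, λ_k)`.
-/

open Matrix ComplexOrder

namespace Matrix

variable {𝕜 : Type*} [RCLike 𝕜] {m n ι κ : Type*} [Fintype n]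

lemma star_dotProduct_diagonal_mulVec [DecidableEq n] (r : n → ℝ) (v : n → 𝕜) :
    star v ⬝ᵥ (diagonal (fun p => (r p : 𝕜)) *ᵥ v) = ((∑ p, r p * ‖v p‖ ^ 2 : ℝ) : 𝕜) := by
  push_cast
  refine Finset.sum_congr rfl fun p _ => ?_
  rw [mulVec_diagonal, Pi.star_apply, RCLike.star_def, mul_left_comm, RCLike.conj_mul]

lemma star_mulVec_dotProduct_mulVec [Fintype m] (C : Matrix m n 𝕜) (P : Matrix m m 𝕜) (y : n → 𝕜) :
    star (C *ᵥ y) ⬝ᵥ (P *ᵥ (C *ᵥ y)) = star y ⬝ᵥ ((Cᴴ * P * C) *ᵥ y) := by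
  rw [star_mulVec, ← mulVec_mulVec, dotProduct_mulVec, vecMul_vecMul, ← dotProduct_mulVec,
    mulVec_mulVec, Matrix.mul_assoc]

lemma sum_mul_norm_sq_mulVec [Fintype m] [DecidableEq m] [DecidableEq n] {C : Matrix m n 𝕜}
    {r : m → ℝ} {s : n → ℝ} (h : Cᴴ * diagonal (fun q => (r q : 𝕜)) * C = diagonal (fun p => (s p : 𝕜)))
    (y : n → 𝕜) : ∑ q, r q * ‖(C *ᵥ y) q‖ ^ 2 = ∑ p, s p * ‖y p‖ ^ 2 := by
  have := star_mulVec_dotProduct_mulVec C (diagonal fun q => (r q : 𝕜)) y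
  rwa [h, star_dotProduct_diagonal_mulVec, star_dotProduct_diagonal_mulVec,
    RCLike.ofReal_inj] at this

lemma exists_ne_zero_mulVec_extend_eq_zero [Fintype ι] [Fintype κ] (C : Matrix m n 𝕜)
    (a : ι → n) (b : κ → m) (h : Fintype.card κ < Fintype.card ι) :
    ∃ z : ι → 𝕜, z ≠ 0 ∧ ∀ t, (C *ᵥ Function.extend a z 0) (b t) = 0 := by
  let f : (ι → 𝕜) →ₗ[𝕜] κ → 𝕜 :=
    LinearMap.funLeft 𝕜 𝕜 b ∘ₗ C.mulVecLin ∘ₗ Function.ExtendByZero.linearMap 𝕜 a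
  obtain ⟨z, hz, hz0⟩ := Submodule.exists_mem_ne_zero_of_ne_bot
    (LinearMap.ker_ne_bot_of_finrank_lt (f := f) (by simpa using h))
  exact ⟨z, hz0, fun t => congrFun (LinearMap.mem_ker.mp hz) t⟩

lemma le_of_conjTranspose_mul_diagonal_mul_eq_diagonal [Fintype m] [DecidableEq m]
    [DecidableEq n] [Fintype ι] [Fintype κ] {C : Matrix m n 𝕜} (hC : Cᴴ * C = 1) {r : m → ℝ}
    {s : n → ℝ} (h : Cᴴ * diagonal (fun q => (r q : 𝕜)) * C = diagonal (fun p => (s p : 𝕜)))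
    {a : ι → n} (ha : a.Injective) (b : κ → m) (hcard : Fintype.card κ < Fintype.card ι)
    {c d : ℝ} (hs : ∀ j, c ≤ s (a j)) (hr : ∀ q ∉ Set.range b, r q ≤ d) : c ≤ d := by
  obtain ⟨z, hz0, hzb⟩ := exists_ne_zero_mulVec_extend_eq_zero C a b hcard
  set y := Function.extend a z 0
  set x := C *ᵥ y
  have hnorm : ∑ q, ‖x q‖ ^ 2 = ∑ p, ‖y p‖ ^ 2 := by
    simpa using sum_mul_norm_sq_mulVec (r := 1) (s := 1) (by simpa using hC) y
  have hpos : 0 < ∑ p, ‖y p‖ ^ 2 := by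
    obtain ⟨j, hj⟩ : ∃ j, z j ≠ 0 := Function.ne_iff.mp hz0
    refine Finset.sum_pos' (fun p _ => by positivity) ⟨a j, Finset.mem_univ _, ?_⟩
    simp only [y, ha.extend_apply]
    positivity
  have hlower : c * ∑ p, ‖y p‖ ^ 2 ≤ ∑ p, s p * ‖y p‖ ^ 2 := by
    rw [Finset.mul_sum]
    refine Finset.sum_le_sum fun p _ => ?_
    by_cases hp : ∃ j, a j = p
    · obtain ⟨j, rfl⟩ := hp
      exact mul_le_mul_of_nonneg_right (hs j) (by positivity)
    · simp [y, Function.extend_apply' _ _ _ hp]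
  have hupper : ∑ q, r q * ‖x q‖ ^ 2 ≤ d * ∑ q, ‖x q‖ ^ 2 := by
    rw [Finset.mul_sum]
    refine Finset.sum_le_sum fun q _ => ?_
    by_cases hq : q ∈ Set.range b
    · obtain ⟨t, rfl⟩ := hq
      simp [x, hzb t]
    · exact mul_le_mul_of_nonneg_right (hr q hq) (by positivity)
  rw [sum_mul_norm_sq_mulVec h, hnorm] at hupper
  exact le_of_mul_le_mul_right (hlower.trans hupper) hpos

lemma IsHermitian.conjTranspose_eigenvectorUnitary_mul_mul [DecidableEq n]
    {A : Matrix n n 𝕜} (hA : A.IsHermitian) :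
    (hA.eigenvectorUnitary : Matrix n n 𝕜)ᴴ * A * hA.eigenvectorUnitary =
      diagonal (fun i => (hA.eigenvalues i : 𝕜)) := by
  simpa [Function.comp_def, star_eq_conjTranspose] using
    hA.conjStarAlgAut_star_eigenvectorUnitary

theorem IsHermitian.eigenvalues_conjTranspose_mul_mul_le {n k : ℕ} (hk : k ≤ n)
    {M : Matrix (Fin n) (Fin n) 𝕜} (hM : M.IsHermitian) {B : Matrix (Fin n) (Fin k) 𝕜}
    (hB : Bᴴ * B = 1) (hA : (Bᴴ * M * B).IsHermitian) {e : Equiv.Perm (Fin n)}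
    (he : Antitone (hM.eigenvalues ∘ e)) {σ : Equiv.Perm (Fin k)}
    (hσ : Antitone (hA.eigenvalues ∘ σ)) (i : Fin k) :
    hA.eigenvalues (σ i) ≤ hM.eigenvalues (e (Fin.castLE hk i)) := by
  set V := (hM.eigenvectorUnitary : Matrix (Fin n) (Fin n) 𝕜)
  set W := (hA.eigenvectorUnitary : Matrix (Fin k) (Fin k) 𝕜)
  have hVV : V * Vᴴ = 1 := Unitary.coe_mul_star_self hM.eigenvectorUnitary
  have hWW : Wᴴ * W = 1 := Unitary.coe_star_mul_self hA.eigenvectorUnitary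
  set C := Vᴴ * B * W
  have hCH : Cᴴ = Wᴴ * Bᴴ * V := by simp [C, Matrix.mul_assoc]
  have hC : Cᴴ * C = 1 := by
    rw [hCH]
    simp only [C, Matrix.mul_assoc]
    rw [← Matrix.mul_assoc V, hVV, Matrix.one_mul, ← Matrix.mul_assoc Bᴴ, hB, Matrix.one_mul,
      hWW]
  have hM' : M = V * diagonal (fun q => (hM.eigenvalues q : 𝕜)) * Vᴴ := by
    simpa [Function.comp_def, star_eq_conjTranspose] using hM.spectral_theorem
  have hD : Cᴴ * diagonal (fun q => (hM.eigenvalues q : 𝕜)) * C =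
      diagonal (fun p => (hA.eigenvalues p : 𝕜)) :=
    calc Cᴴ * diagonal (fun q => (hM.eigenvalues q : 𝕜)) * C
        = Wᴴ * (Bᴴ * (V * diagonal (fun q => (hM.eigenvalues q : 𝕜)) * Vᴴ) * B) * W := by
          rw [hCH]; simp only [C, Matrix.mul_assoc]
      _ = Wᴴ * (Bᴴ * M * B) * W := by rw [← hM']
      _ = _ := hA.conjTranspose_eigenvectorUnitary_mul_mul
  refine le_of_conjTranspose_mul_diagonal_mul_eq_diagonal hC hD
    (a := σ ∘ Fin.castLE i.isLt) (σ.injective.comp (Fin.castLE_injective _))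
    (e ∘ Fin.castLE (i.isLt.le.trans hk)) (by simp) (fun j => hσ ?_) (fun q hq => ?_)
  · exact Fin.le_def.mpr (by simpa using Nat.lt_succ_iff.mp j.isLt)
  · rw [← e.apply_symm_apply q]
    refine he (Fin.le_def.mpr (not_lt.mp fun hlt => hq ⟨⟨_, hlt⟩, ?_⟩))
    simp

lemma IsHermitian.trace_cfc [DecidableEq n] {A : Matrix n n 𝕜} (hA : A.IsHermitian)
    (f : ℝ → ℝ) : (cfc f A).trace = ∑ i, (f (hA.eigenvalues i) : 𝕜) := by
  rw [hA.cfc_eq, IsHermitian.cfc, Unitary.conjStarAlgAut_apply, trace_mul_cycle,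
    Unitary.coe_star_mul_self, Matrix.one_mul, trace_diagonal]
  rfl

lemma IsHermitian.trace_inv [DecidableEq n] {A : Matrix n n 𝕜} (hA : A.IsHermitian)
    (hA' : IsUnit A) : A⁻¹.trace = ∑ i, ((hA.eigenvalues i)⁻¹ : 𝕜) := by
  obtain ⟨u, rfl⟩ := hA'
  rw [← coe_units_inv, ← cfc_inv_id (R := ℝ) u hA.isSelfAdjoint, hA.trace_cfc]
  simp

lemma trace_inv_diagonal {K : Type*} [Field K] [DecidableEq n] {d : n → K}
    (hd : IsUnit (diagonal d)) : (diagonal d)⁻¹.trace = ∑ i, (d i)⁻¹ := by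
  have hd0 : ∀ i, d i ≠ 0 := fun i => (Pi.isUnit_iff.mp (isUnit_diagonal.mp hd) i).ne_zero
  have hinv : diagonal (fun i => (d i)⁻¹) * diagonal d = 1 := by
    simp [diagonal_mul_diagonal, hd0]
  rw [inv_eq_left_inv hinv, trace_diagonal]

lemma conjTranspose_mul_mul_eq_diagonal {R : Type*} [CommSemiring R] [StarRing R] [Fintype m]
    [DecidableEq n] {M : Matrix m m R} {B : Matrix m n R} (hB : Bᴴ * B = 1) {d : n → R}
    (h : ∀ i, M *ᵥ (fun j => B j i) = d i • (fun j => B j i)) : Bᴴ * M * B = diagonal d := by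
  have hMB : M * B = B * diagonal d := by
    ext p i
    rw [mul_diagonal, mul_comm]
    exact congrFun (h i) p
  rw [Matrix.mul_assoc, hMB, ← Matrix.mul_assoc, hB, Matrix.one_mul]

end Matrix

lemma Tuple.exists_perm_antitone_comp {α : Type*} [LinearOrder α] {k : ℕ} (f : Fin k → α) :
    ∃ σ : Equiv.Perm (Fin k), Antitone (f ∘ σ) :=
  ⟨Fin.revPerm.trans (Tuple.sort f), fun _ _ hab => Tuple.monotone_sort f (Fin.rev_le_rev.mpr hab)⟩

/-- For M Hermitian PSD with decreasingly ordered eigenvalues μ and μ_k > 0, and B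
semi-unitary with Bᴴ M B invertible, tr((Bᴴ M B)⁻¹) ≥ Σᵢ₌₁ᵏ 1/μᵢ, with equality when the
columns of B are orthonormal eigenvectors of M for the k largest eigenvalues. -/
theorem stmt_8 {n k : ℕ} (hk : k ≤ n) (M : Matrix (Fin n) (Fin n) ℂ)
    (hM : M.PosSemidef)
    (μ : Fin n → ℝ) (hμa : Antitone μ)
    (hμ : ∃ e : Fin n ≃ Fin n, ∀ i, μ i = hM.1.eigenvalues (e i))
    (B : Matrix (Fin n) (Fin k) ℂ) (hB : Bᴴ * B = 1)
    (hinv : IsUnit (Bᴴ * M * B)) :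
    (∑ i : Fin k, 1 / μ ⟨i.val, by omega⟩) ≤ (Matrix.trace ((Bᴴ * M * B)⁻¹)).re ∧
    ((∀ i : Fin k, M *ᵥ (fun j => B j i) = μ ⟨i.val, by omega⟩ • (fun j => B j i)) →
      (Matrix.trace ((Bᴴ * M * B)⁻¹)).re = ∑ i : Fin k, 1 / μ ⟨i.val, by omega⟩) := by
  obtain ⟨e, he⟩ := hμ
  have hA : (Bᴴ * M * B).PosDef := (hM.conjTranspose_mul_mul_same B).posDef_iff_isUnit.mpr hinv
  obtain ⟨σ, hσ⟩ := Tuple.exists_perm_antitone_comp hA.isHermitian.eigenvalues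
  have hμe : hM.1.eigenvalues ∘ e = μ := funext fun i => (he i).symm
  refine ⟨?_, fun hcol => ?_⟩
  · rw [hA.isHermitian.trace_inv hinv, Complex.re_sum]
    conv_rhs => rw [← Equiv.sum_comp σ]
    refine Finset.sum_le_sum fun i _ => ?_
    have hinterlace : hA.isHermitian.eigenvalues (σ i) ≤ μ ⟨i.val, by omega⟩ := by
      rw [he]
      exact hM.1.eigenvalues_conjTranspose_mul_mul_le hk hB hA.isHermitian (hμe ▸ hμa) hσ i
    simpa [one_div] using inv_anti₀ (hA.eigenvalues_pos _) hinterlace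
  · have hdiag : Bᴴ * M * B = diagonal fun i => (μ ⟨i.val, by omega⟩ : ℂ) :=
      conjTranspose_mul_mul_eq_diagonal hB fun i => by rw [hcol i, Complex.coe_smul]
    rw [hdiag] at hinv ⊢
    rw [trace_inv_diagonal hinv, Complex.re_sum]
    simp [one_div]
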